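/- Let γ1 ≠ 0, γ2, γ6 be real numbers and let g be the 4-dimensional real Lie algebra with basis u1,u2,u3,u4 and only nonzero brackets [u1,u3] = −u2, [u1,u4] = γ1·u1 + γ2·u2 + 3γ6·u3, [u2,u4] = −γ1·u2, [u3,u4] = γ6·u2 − 2γ1·u3. Define v1 = u1 + (γ6/γ1)·u3, v2 = −u3, v3 = u2, v4 = −γ6·u1 + γ2·u3 + u4. Then {v1,v2,v3,v4} is a basis of g and the only nonzero brackets are [v1,v2] = v3, [v1,v4] = γ1·v1, [v2,v4] = −2γ1·v2, [v3,v4] = −γ1·v3; consequently g is isomorphic to the Lie algebra d_{4,2}. -/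
import Mathlib


namespace Stmt12

abbrev V : Type := Fin 4 → ℝ

noncomputable def e (i : Fin 4) : V := fun j => if j = i then 1 else 0

noncomputable def br (g1 g2 g6 : ℝ) (x y : V) : V :=
  let A := x 0 * y 3 - x 3 * y 0
  let B := x 1 * y 3 - x 3 * y 1
  let C := x 2 * y 3 - x 3 * y 2
  let Q := x 0 * y 2 - x 2 * y 0
  ![g1 * A, -Q + g2 * A - g1 * B + g6 * C, 3 * g6 * A - 2 * g1 * C, 0]

theorem stmt_12 (g1 g2 g6 : ℝ) (hg1 : g1 ≠ 0) :
    let v1 : V := e 0 + (g6 / g1) • e 2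
    let v2 : V := -(e 2)
    let v3 : V := e 1
    let v4 : V := (-g6) • e 0 + g2 • e 2 + e 3
    LinearIndependent ℝ ![v1, v2, v3, v4] ∧
    br g1 g2 g6 v1 v2 = v3 ∧
    br g1 g2 g6 v1 v3 = 0 ∧
    br g1 g2 g6 v2 v3 = 0 ∧
    br g1 g2 g6 v1 v4 = g1 • v1 ∧
    br g1 g2 g6 v2 v4 = (-(2 * g1)) • v2 ∧
    br g1 g2 g6 v3 v4 = (-g1) • v3 ∧
    (∃ a : ℝ, a ≠ 0 ∧ br g1 g2 g6 v1 v2 = v3 ∧ br g1 g2 g6 v1 v4 = a • v1 ∧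
      br g1 g2 g6 v2 v4 = (-(2 * a)) • v2 ∧ br g1 g2 g6 v3 v4 = (-a) • v3) := by
  intro v1 v2 v3 v4
  have h12 : br g1 g2 g6 v1 v2 = v3 := by
    funext j; fin_cases j <;>
      · simp [br, v1, v2, v3, e]
  have h13 : br g1 g2 g6 v1 v3 = 0 := by
    funext j; fin_cases j <;>
      · simp [br, v1, v3, e]
  have h23 : br g1 g2 g6 v2 v3 = 0 := by
    funext j; fin_cases j <;>
      · simp [br, v2, v3, e]
  have h14 : br g1 g2 g6 v1 v4 = g1 • v1 := by
    funext j; fin_cases j <;>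
      · simp [br, v1, v4, e]
        try field_simp
        try ring
  have h24 : br g1 g2 g6 v2 v4 = (-(2 * g1)) • v2 := by
    funext j; fin_cases j <;>
      · simp [br, v2, v4, e]
  have h34 : br g1 g2 g6 v3 v4 = (-g1) • v3 := by
    funext j; fin_cases j <;>
      · simp [br, v3, v4, e]
  have hli : LinearIndependent ℝ ![v1, v2, v3, v4] := by
    rw [Fintype.linearIndependent_iff]
    intro c hc
    have h0 := congrFun hc 0
    have h1 := congrFun hc 1
    have h2 := congrFun hc 2
    have h3 := congrFun hc 3
    simp [Fin.sum_univ_four, v1, v2, v3, v4, e] at h0 h1 h2 h3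
    intro i
    fin_cases i
    · simpa [h3] using h0
    · have hc0 : c 0 = 0 := by simpa [h3] using h0
      have := h2
      rw [hc0, h3] at this
      simpa using this
    · exact h1
    · exact h3
  exact ⟨hli, h12, h13, h23, h14, h24, h34, g1, hg1, h12, h14, h24, h34⟩

end Stmt12
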